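/- arXiv:1608.02470 — 4 statements merged into one kernel-verified Lean document; each statement's English description precedes it below -/
import Mathlib

section
/- Let V be a complex vector space, G a group acting linearly on V, and χ : G → ℂ^× a character. Suppose (ξ_i)_{i ≥ -k₀} is a family of vectors in V satisfying, for all g ∈ G and all i, the recursion (g − χ(g))·ξ_i = χ(g) Σ_{k ≥ 1} c_k(g) ξ_{i−k} (finite sum, with ξ_j = 0 for j < −k₀), where c_k(g) = (log|ν(g)|)^k / k! for some homomorphism g ↦ log|ν(g)| to ℝ. If ξ_{−k₀} ≠ 0 and there exists g with log|ν(g)| ≠ 0, then the vectors ξ_{−k₀}, ξ_{−k₀+1}, …, ξ_0, … are linearly independent. -/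
/-- Linear independence of Laurent coefficients.  Let `G` act linearly on a
complex vector space `V`, `χ : G → ℂˣ` a character and `L : G → ℝ` a homomorphism
(`L g = log |ν(g)|`).  Suppose the family `ξ : ℕ → V` (with `ξ n` standing for the
Laurent coefficient `ξ_{n - k₀}`) satisfies the recursion
`g • ξ n = χ(g) • (ξ n + Σ_{k=1}^{n} (L g ^ k / k!) • ξ (n - k))`.
If `ξ 0 ≠ 0` (i.e. `ξ_{-k₀} ≠ 0`) and `L g ≠ 0` for some `g`, then the vectors
`ξ_{-k₀}, ξ_{-k₀+1}, …` are linearly independent. -/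
theorem stmt_7 {G V : Type*} [Group G] [AddCommGroup V] [Module ℂ V]
    [DistribMulAction G V] [SMulCommClass G ℂ V]
    (χ : G →* ℂˣ) (L : G → ℝ) (hL : ∀ g h : G, L (g * h) = L g + L h)
    (ξ : ℕ → V)
    (hrec : ∀ (g : G) (n : ℕ), g • ξ n =
      (χ g : ℂ) • (ξ n + ∑ k ∈ Finset.Icc 1 n,
        (((L g ^ k / (Nat.factorial k : ℝ)) : ℝ) : ℂ) • ξ (n - k)))
    (h0 : ξ 0 ≠ 0) (hg : ∃ g : G, L g ≠ 0) :
    LinearIndependent ℂ ξ := by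
  obtain ⟨g, hg0⟩ := hg
  set T : Module.End ℂ V :=
    ((χ g : ℂ)⁻¹ • (DistribMulAction.toLinearMap ℂ V g)) - LinearMap.id with hT
  have hTξ : ∀ n, T (ξ n) = ∑ k ∈ Finset.Icc 1 n,
      (((L g ^ k / (Nat.factorial k : ℝ)) : ℝ) : ℂ) • ξ (n - k) := by
    intro n
    have h1 : T (ξ n) = (χ g : ℂ)⁻¹ • (g • ξ n) - ξ n := rfl
    rw [h1, hrec, smul_smul, inv_mul_cancel₀ (Units.ne_zero (χ g)), one_smul,
      add_sub_cancel_left]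
  -- Claim A: T^m kills ξ n for m > n
  have hA : ∀ n, ∀ m, n < m → (T ^ m) (ξ n) = 0 := by
    intro n
    induction n using Nat.strong_induction_on with
    | _ n ih =>
      intro m hm
      obtain ⟨m', rfl⟩ : ∃ m', m = m' + 1 := ⟨m - 1, by omega⟩
      rw [pow_succ, Module.End.mul_apply, hTξ, map_sum]
      refine Finset.sum_eq_zero fun k hk => ?_
      rw [Finset.mem_Icc] at hk
      rw [map_smul, ih (n - k) (by omega) m' (by omega), smul_zero]
  -- Claim B: T^n ξ n = (L g)^n • ξ 0
  have hB : ∀ n, (T ^ n) (ξ n) = ((L g : ℂ)) ^ n • ξ 0 := by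
    intro n
    induction n with
    | zero => simp
    | succ n ih =>
      rw [pow_succ, Module.End.mul_apply, hTξ, map_sum]
      have : ∀ k ∈ Finset.Icc 1 (n + 1), k ≠ 1 →
          (T ^ n) ((((L g ^ k / (Nat.factorial k : ℝ)) : ℝ) : ℂ) • ξ (n + 1 - k)) = 0 := by
        intro k hk hk1
        rw [Finset.mem_Icc] at hk
        rw [map_smul, hA (n + 1 - k) n (by omega), smul_zero]
      rw [Finset.sum_eq_single_of_mem 1 (by simp) this]
      simp only [pow_one, Nat.factorial_one, Nat.cast_one, div_one, Nat.add_sub_cancel]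
      rw [map_smul, ih, smul_smul, ← pow_succ']
  -- linear independence
  rw [linearIndependent_iff']
  have key : ∀ s : Finset ℕ, ∀ a : ℕ → ℂ, (∑ i ∈ s, a i • ξ i) = 0 → ∀ i ∈ s, a i = 0 := by
    intro s
    induction s using Finset.strongInduction with
    | _ s ih =>
      intro a hsum i hi
      have hne : s.Nonempty := ⟨i, hi⟩
      set N := s.max' hne with hN
      have haN : a N = 0 := by
        have h1 : (T ^ N) (∑ j ∈ s, a j • ξ j) = 0 := by rw [hsum, map_zero]
        rw [map_sum] at h1
        have h2 : ∀ j ∈ s, j ≠ N → (T ^ N) (a j • ξ j) = 0 := by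
          intro j hj hjN
          have : j < N := lt_of_le_of_ne (s.le_max' j hj) hjN
          rw [map_smul, hA j N this, smul_zero]
        rw [Finset.sum_eq_single_of_mem N (s.max'_mem hne) h2, map_smul, hB] at h1
        have hLn : ((L g : ℂ)) ^ N ≠ 0 :=
          pow_ne_zero _ (by exact_mod_cast Complex.ofReal_ne_zero.mpr hg0)
        rcases smul_eq_zero.mp h1 with h | h
        · exact h
        · rcases smul_eq_zero.mp h with h' | h'
          · exact absurd h' hLn
          · exact absurd h' h0
      have hsum' : ∑ j ∈ s.erase N, a j • ξ j = 0 := by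
        rw [Finset.sum_erase_eq_sub (s.max'_mem hne), hsum, haN, zero_smul, sub_zero]
      rcases eq_or_ne i N with rfl | hiN
      · exact haN
      · exact ih (s.erase N) (Finset.erase_ssubset (s.max'_mem hne)) a hsum' i
          (Finset.mem_erase.mpr ⟨hiN, hi⟩)
  exact key
end

section
/- With the setup of the recursion (g − χ(g))·ξ_i = χ(g) Σ_{k=1}^{i+k₀} (L(g)^k/k!) ξ_{i−k}: by induction, each ξ_i lies in the space of generalized χ-invariant vectors of order ≤ i + k₀, i.e. any product of (i + k₀ + 1) operators of the form (g − χ(g)), g ∈ G, annihilates ξ_i. -/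
section Aux

variable {G V : Type*} [Group G] [AddCommGroup V] [Module ℂ V]
    [DistribMulAction G V] [SMulCommClass G ℂ V] (χ : G →* ℂˣ)

lemma stmt8_foldr_add (l : List G) (a b : V) :
    l.foldr (fun g v => g • v - (χ g : ℂ) • v) (a + b) =
      l.foldr (fun g v => g • v - (χ g : ℂ) • v) a +
      l.foldr (fun g v => g • v - (χ g : ℂ) • v) b := by
  induction l with
  | nil => simp
  | cons g t ih => simp [ih, smul_add]; abel

lemma stmt8_foldr_smul (l : List G) (c : ℂ) (v : V) :
    l.foldr (fun g v => g • v - (χ g : ℂ) • v) (c • v) =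
      c • l.foldr (fun g v => g • v - (χ g : ℂ) • v) v := by
  induction l with
  | nil => simp
  | cons g t ih => simp [ih, smul_comm _ c, smul_sub]

lemma stmt8_foldr_zero (l : List G) :
    l.foldr (fun g v => g • v - (χ g : ℂ) • v) (0 : V) = 0 := by
  induction l with
  | nil => simp
  | cons g t ih => simp [ih]

lemma stmt8_foldr_sum {ι : Type*} (l : List G) (s : Finset ι) (f : ι → V) :
    l.foldr (fun g v => g • v - (χ g : ℂ) • v) (∑ i ∈ s, f i) =
      ∑ i ∈ s, l.foldr (fun g v => g • v - (χ g : ℂ) • v) (f i) := by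
  classical
  induction s using Finset.induction with
  | empty => simpa using stmt8_foldr_zero χ l
  | insert a s hx ih =>
    rw [Finset.sum_insert hx, Finset.sum_insert hx, stmt8_foldr_add, ih]

end Aux

/-- With the recursion
`g • ξ n = χ(g) • (ξ n + Σ_{k=1}^{n} (L g ^ k / k!) • ξ (n - k))` (indices shifted so
that `ξ n` is the Laurent coefficient `ξ_{n-k₀}`, of "order ≤ n"), each `ξ n` is a
generalized `χ`-invariant vector of order ≤ n: every product of `n + 1` operators
`(g - χ g)`, `g ∈ G`, annihilates `ξ n`. -/
theorem stmt_8 {G V : Type*} [Group G] [AddCommGroup V] [Module ℂ V]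
    [DistribMulAction G V] [SMulCommClass G ℂ V]
    (χ : G →* ℂˣ) (L : G → ℝ) (hL : ∀ g h : G, L (g * h) = L g + L h)
    (ξ : ℕ → V)
    (hrec : ∀ (g : G) (n : ℕ), g • ξ n =
      (χ g : ℂ) • (ξ n + ∑ k ∈ Finset.Icc 1 n,
        (((L g ^ k / (Nat.factorial k : ℝ)) : ℝ) : ℂ) • ξ (n - k)))
    (n : ℕ) (l : List G) (hl : l.length = n + 1) :
    l.foldr (fun g v => g • v - (χ g : ℂ) • v) (ξ n) = 0 := by
  have key : ∀ n : ℕ, ∀ l : List G, n + 1 ≤ l.length →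
      l.foldr (fun g v => g • v - (χ g : ℂ) • v) (ξ n) = 0 := by
    intro n
    induction n using Nat.strong_induction_on with
    | _ n ih =>
      intro l hlen
      rcases l.eq_nil_or_concat with rfl | ⟨t, g, rfl⟩
      · simp at hlen
      · have hstep : g • ξ n - (χ g : ℂ) • ξ n =
            (χ g : ℂ) • ∑ k ∈ Finset.Icc 1 n,
              (((L g ^ k / (Nat.factorial k : ℝ)) : ℝ) : ℂ) • ξ (n - k) := by
          rw [hrec g n, smul_add]; abel
        have ht : n ≤ t.length := by
          simpa [List.length_concat] using hlen
        calc (t.concat g).foldr (fun g v => g • v - (χ g : ℂ) • v) (ξ n)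
            = t.foldr (fun g v => g • v - (χ g : ℂ) • v)
                (g • ξ n - (χ g : ℂ) • ξ n) := by
              simp [List.concat_eq_append, List.foldr_append]
          _ = (χ g : ℂ) • ∑ k ∈ Finset.Icc 1 n,
                (((L g ^ k / (Nat.factorial k : ℝ)) : ℝ) : ℂ) •
                  t.foldr (fun g v => g • v - (χ g : ℂ) • v) (ξ (n - k)) := by
              rw [hstep, stmt8_foldr_smul, stmt8_foldr_sum]
              simp_rw [stmt8_foldr_smul]
          _ = 0 := by
              have hz : ∀ k ∈ Finset.Icc 1 n,
                  (((L g ^ k / (Nat.factorial k : ℝ)) : ℝ) : ℂ) •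
                    t.foldr (fun g v => g • v - (χ g : ℂ) • v) (ξ (n - k)) = 0 := by
                intro k hk
                obtain ⟨hk1, hkn⟩ := Finset.mem_Icc.mp hk
                rw [ih (n - k) (by omega) t (by omega), smul_zero]
              rw [Finset.sum_congr rfl hz, Finset.sum_const_zero, smul_zero]
  exact key n l (by omega)
end

section
/- With the formal Laurent series setup g·Ξ = W(g)Ξ where Ξ = Σ_{i≥−k₀} ξ_i t^i ∈ M((t)) for a G-module M and W(g) = 1 + Σ_{j≥1} ϖ_j(g)t^j ∈ ℂ[[t]]: for elements g₁, …, g_{k₀} ∈ G one has (g₁ − 1)(g₂ − 1)⋯(g_{k₀} − 1)·ξ₀ = (Π_{i=1}^{k₀} ϖ₁(g_i)) · ξ_{−k₀}. In particular, if ϖ₁(g_i) ≠ 0 for all i and ξ_{−k₀} ≠ 0, then (g₁−1)⋯(g_{k₀}−1)·ξ₀ ≠ 0. -/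
private lemma stmt13_aux {G M : Type*} [Group G] [AddCommGroup M] [Module ℂ M]
    [DistribMulAction G M] [SMulCommClass G ℂ M]
    (ϖ : G → ℕ → ℂ) (ξ : ℕ → M)
    (hrec : ∀ (g : G) (n : ℕ), g • ξ n = ξ n + ∑ j ∈ Finset.Icc 1 n, ϖ g j • ξ (n - j)) :
    ∀ (l : List G) (n : ℕ), l.length ≤ n →
      ∃ c : ℕ → ℂ, c l.length = (l.map (fun g => ϖ g 1)).prod ∧
        l.foldr (fun g m => g • m - m) (ξ n) = ∑ j ∈ Finset.Icc l.length n, c j • ξ (n - j) := by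
  intro l
  induction l with
  | nil =>
    intro n _
    refine ⟨fun j => if j = 0 then 1 else 0, by simp, ?_⟩
    simp only [List.foldr_nil, List.length_nil]
    rw [Finset.sum_eq_single 0]
    · simp
    · intro b _ hb; simp [hb]
    · simp
  | cons g l' ih =>
    intro n hn
    simp only [List.length_cons] at hn
    obtain ⟨c, hc, hX⟩ := ih n (by omega)
    set m := l'.length with hm
    refine ⟨fun j' => ∑ j ∈ Finset.Icc m (j' - 1), c j * ϖ g (j' - j), ?_, ?_⟩
    · simp only [List.length_cons, ← hm]
      rw [show m + 1 - 1 = m by omega, Finset.Icc_self, Finset.sum_singleton,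
        show m + 1 - m = 1 by omega, List.map_cons, List.prod_cons, ← hc, mul_comm]
    · simp only [List.foldr_cons, hX, List.length_cons, ← hm]
      rw [Finset.smul_sum, ← Finset.sum_sub_distrib]
      have step : ∀ j ∈ Finset.Icc m n,
          g • (c j • ξ (n - j)) - c j • ξ (n - j)
            = ∑ j' ∈ Finset.Icc (j + 1) n, (c j * ϖ g (j' - j)) • ξ (n - j') := by
        intro j hj
        simp only [Finset.mem_Icc] at hj
        rw [smul_comm, hrec g (n - j), smul_add, add_sub_cancel_left, Finset.smul_sum]
        refine Finset.sum_nbij' (fun i => j + i) (fun j' => j' - j) ?_ ?_ ?_ ?_ ?_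
        · intro i hi; simp only [Finset.mem_Icc] at hi ⊢; omega
        · intro j' hj'; simp only [Finset.mem_Icc] at hj' ⊢; omega
        · intro i hi; show j + i - j = i; simp only [Finset.mem_Icc] at hi; omega
        · intro j' hj'; show j + (j' - j) = j'; simp only [Finset.mem_Icc] at hj'; omega
        · intro i hi
          simp only [Finset.mem_Icc] at hi
          rw [smul_smul, show j + i - j = i by omega, show n - j - i = n - (j + i) by omega]
      rw [Finset.sum_congr rfl step, Finset.sum_comm' (t' := Finset.Icc (m + 1) n)
        (s' := fun j' => Finset.Icc m (j' - 1))]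
      · exact Finset.sum_congr rfl fun j' _ => (Finset.sum_smul).symm
      · intro x y; simp only [Finset.mem_Icc]; omega

/-- With the formal Laurent series setup `g • Ξ = W(g) Ξ`, where
`Ξ = Σ_{i ≥ -k₀} ξ_i t^i` has coefficients in a `G`-module `M` (reindexed by `ℕ`, so
`ξ n` stands for `ξ_{n-k₀}`) and `W(g) = 1 + Σ_{j≥1} ϖ_j(g) t^j`, i.e. coefficientwise
`g • ξ n = ξ n + Σ_{j=1}^{n} ϖ_j(g) • ξ (n-j)`: for `g₁, …, g_{k₀} ∈ G` one has
`(g₁ - 1)⋯(g_{k₀} - 1) • ξ₀ = (Π ϖ₁(gᵢ)) • ξ_{-k₀}`; in particular if all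
`ϖ₁(gᵢ) ≠ 0` and `ξ_{-k₀} ≠ 0` this is nonzero. -/
theorem stmt_13 {G M : Type*} [Group G] [AddCommGroup M] [Module ℂ M]
    [DistribMulAction G M] [SMulCommClass G ℂ M]
    (ϖ : G → ℕ → ℂ) (k₀ : ℕ) (ξ : ℕ → M)
    (hrec : ∀ (g : G) (n : ℕ), g • ξ n = ξ n + ∑ j ∈ Finset.Icc 1 n, ϖ g j • ξ (n - j))
    (gs : Fin k₀ → G) :
    (List.ofFn gs).foldr (fun g m => g • m - m) (ξ k₀) = (∏ i, ϖ (gs i) 1) • ξ 0 ∧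
    ((∀ i, ϖ (gs i) 1 ≠ 0) → ξ 0 ≠ 0 →
      (List.ofFn gs).foldr (fun g m => g • m - m) (ξ k₀) ≠ 0) := by
  obtain ⟨c, hc, h⟩ := stmt13_aux ϖ ξ hrec (List.ofFn gs) k₀ (by simp)
  simp only [List.length_ofFn] at hc h
  have hmain : (List.ofFn gs).foldr (fun g m => g • m - m) (ξ k₀) = (∏ i, ϖ (gs i) 1) • ξ 0 := by
    rw [h, Finset.Icc_self, Finset.sum_singleton, Nat.sub_self, hc, List.map_ofFn,
      List.prod_ofFn]
    rfl
  refine ⟨hmain, fun h1 h2 => ?_⟩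
  rw [hmain]
  exact smul_ne_zero (Finset.prod_ne_zero_iff.mpr fun i _ => h1 i) h2
end

section
/- Every generalized invariant distribution on F^× (for the multiplication action of F^× on itself, and any admissible character χ) is of the form P(val(x)) · χ(x) d^×x for a polynomial P: precisely, if ξ is a distribution on the ℓ-space F^× satisfying (g₀ − χ(g₀))⋯(g_k − χ(g_k))·ξ = 0 for all g_i ∈ F^×, then there is a polynomial P of degree ≤ k in one variable with ξ = P(val(·))·μ_χ, where μ_χ is the χ-invariant distribution χ(x)d^×x. -/
noncomputable def SchwartzSubmodule (X : Type*) [TopologicalSpace X] :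
    Submodule ℂ (LocallyConstant X ℂ) where
  carrier := {f | HasCompactSupport (⇑f)}
  add_mem' := by intro f g hf hg; simpa using hf.add hg
  zero_mem' := by
    simp only [Set.mem_setOf_eq, LocallyConstant.coe_zero]
    exact HasCompactSupport.zero
  smul_mem' := by
    intro c f hf
    simp only [Set.mem_setOf_eq, LocallyConstant.coe_smul]
    exact hf.smul_left

noncomputable def translateS (p : ℕ) [Fact (Nat.Prime p)] (g : ℚ_[p]ˣ) :
    ↥(SchwartzSubmodule ℚ_[p]ˣ) →ₗ[ℂ] ↥(SchwartzSubmodule ℚ_[p]ˣ) :=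
  (LocallyConstant.comapₗ ℂ ⟨fun x => g⁻¹ * x, by continuity⟩).restrict
    (by
      intro f hf
      show HasCompactSupport ⇑(LocallyConstant.comap ⟨fun x => g⁻¹ * x, by continuity⟩ f)
      rw [LocallyConstant.coe_comap]
      exact hf.comp_homeomorph (Homeomorph.mulLeft g⁻¹))

namespace Stmt18

variable (p : ℕ) [Fact (Nat.Prime p)]

abbrev SS := ↥(SchwartzSubmodule ℚ_[p]ˣ)

variable {p}

lemma translate_apply (g : ℚ_[p]ˣ) (f : SS p) (x : ℚ_[p]ˣ) :
    ((translateS p g f : LocallyConstant ℚ_[p]ˣ ℂ)) x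
      = (f : LocallyConstant ℚ_[p]ˣ ℂ) (g⁻¹ * x) := by
  show (LocallyConstant.comap ⟨fun x => g⁻¹ * x, by continuity⟩ (f : LocallyConstant ℚ_[p]ˣ ℂ)) x = _
  rw [LocallyConstant.coe_comap]
  rfl

lemma translate_mul (g h : ℚ_[p]ˣ) (f : SS p) :
    translateS p g (translateS p h f) = translateS p (g * h) f := by
  apply Subtype.ext
  apply LocallyConstant.ext
  intro x
  simp only [translate_apply]
  rw [mul_inv_rev, mul_assoc]

lemma translate_one (f : SS p) : translateS p 1 f = f := by
  apply Subtype.ext; apply LocallyConstant.ext; intro x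
  simp [translate_apply]

end Stmt18
section C2
variable {p : ℕ} [Fact (Nat.Prime p)]

lemma p_gt1R : (1:ℝ) < (p:ℝ) := by
  exact_mod_cast (Fact.out : Nat.Prime p).one_lt

variable (p) in
noncomputable def rad (m : ℕ) : ℝ := (p:ℝ) ^ (-(m+1) : ℤ)

lemma rad_pos (m : ℕ) : 0 < rad p m := zpow_pos (by have := p_gt1R (p := p); linarith) _

lemma rad_lt_one (m : ℕ) : rad p m < 1 := by
  have := p_gt1R (p := p)
  have : (p:ℝ) ^ (-(m+1) : ℤ) < (p:ℝ) ^ (0 : ℤ) := by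
    apply zpow_lt_zpow_right₀ this
    omega
  simpa [rad] using this

lemma rad_antitone {m m' : ℕ} (h : m ≤ m') : rad p m' ≤ rad p m := by
  apply zpow_le_zpow_right₀ (le_of_lt p_gt1R)
  omega

lemma norm_eq_one_of_close {x : ℚ_[p]} (h : ‖x - 1‖ < 1) : ‖x‖ = 1 := by
  have h1 : ‖x‖ ≤ 1 := by
    calc ‖x‖ = ‖(x - 1) + 1‖ := by ring_nf
    _ ≤ max ‖x - 1‖ ‖(1:ℚ_[p])‖ := IsUltrametricDist.norm_add_le_max _ _
    _ ≤ 1 := by rw [max_le_iff]; exact ⟨le_of_lt h, by simp⟩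
  have h2 : (1:ℝ) ≤ ‖x‖ := by
    have : ‖(1:ℚ_[p])‖ ≤ max ‖x‖ ‖x - 1‖ := by
      calc ‖(1:ℚ_[p])‖ = ‖x + -(x-1)‖ := by ring_nf
      _ ≤ max ‖x‖ ‖-(x-1)‖ := IsUltrametricDist.norm_add_le_max _ _
      _ = max ‖x‖ ‖x-1‖ := by rw [norm_neg]
    rw [norm_one] at this
    rcases le_max_iff.mp this with h' | h'
    · exact h'
    · linarith
  linarith

variable (p) in
noncomputable def Vm (m : ℕ) : Subgroup ℚ_[p]ˣ where
  carrier := {u | ‖(u : ℚ_[p]) - 1‖ ≤ rad p m}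
  one_mem' := by simp [rad_pos m |>.le]
  mul_mem' := by
    intro u v hu hv
    simp only [Set.mem_setOf_eq] at *
    have hu1 : ‖(u : ℚ_[p])‖ = 1 :=
      norm_eq_one_of_close (lt_of_le_of_lt hu (rad_lt_one m))
    have : ((u*v : ℚ_[p]ˣ) : ℚ_[p]) - 1 = (u : ℚ_[p]) * ((v:ℚ_[p]) - 1) + ((u:ℚ_[p]) - 1) := by
      push_cast; ring
    rw [this]
    calc ‖(u : ℚ_[p]) * ((v:ℚ_[p]) - 1) + ((u:ℚ_[p]) - 1)‖
        ≤ max ‖(u : ℚ_[p]) * ((v:ℚ_[p]) - 1)‖ ‖(u:ℚ_[p]) - 1‖ := IsUltrametricDist.norm_add_le_max _ _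
      _ ≤ rad p m := by
          rw [max_le_iff]
          constructor
          · rw [norm_mul, hu1, one_mul]; exact hv
          · exact hu
  inv_mem' := by
    intro u hu
    simp only [Set.mem_setOf_eq] at *
    have hu1 : ‖(u : ℚ_[p])‖ = 1 :=
      norm_eq_one_of_close (lt_of_le_of_lt hu (rad_lt_one m))
    have h0 : (u : ℚ_[p]) ≠ 0 := by
      intro h; rw [h] at hu1; simp at hu1
    have : ((u⁻¹ : ℚ_[p]ˣ) : ℚ_[p]) - 1 = ((u:ℚ_[p]))⁻¹ * (1 - (u:ℚ_[p])) := by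
      field_simp
      rw [sub_mul, Units.inv_mul, one_mul]
    rw [this, norm_mul, norm_inv, hu1, norm_sub_rev]
    simpa using hu

lemma mem_Vm {m : ℕ} {u : ℚ_[p]ˣ} : u ∈ Vm p m ↔ ‖(u : ℚ_[p]) - 1‖ ≤ rad p m := Iff.rfl

lemma Vm_antitone {m m' : ℕ} (h : m ≤ m') : (Vm p m' : Set ℚ_[p]ˣ) ⊆ Vm p m := by
  intro u hu
  exact le_trans hu (rad_antitone h)

lemma norm_one_of_mem_Vm {m : ℕ} {u : ℚ_[p]ˣ} (hu : u ∈ Vm p m) : ‖(u : ℚ_[p])‖ = 1 :=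
  norm_eq_one_of_close (lt_of_le_of_lt hu (rad_lt_one m))

lemma isClopen_Vm (m : ℕ) : IsClopen ((Vm p m : Set ℚ_[p]ˣ)) := by
  constructor
  · -- closed
    have : (Vm p m : Set ℚ_[p]ˣ)
        = (Units.val) ⁻¹' (Metric.closedBall (1:ℚ_[p]) (rad p m)) := by
      ext u
      simp only [Metric.mem_closedBall, Set.mem_preimage, dist_eq_norm]
      rw [SetLike.mem_coe, mem_Vm]
    rw [this]
    exact Metric.isClosed_closedBall.preimage Units.continuous_val
  · -- open
    have : (Vm p m : Set ℚ_[p]ˣ)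
        = (Units.val) ⁻¹' (Metric.ball (1:ℚ_[p]) ((p:ℝ) ^ (-(m:ℤ)))) := by
      ext u
      simp only [Metric.mem_ball, Set.mem_preimage, dist_eq_norm]
      rw [SetLike.mem_coe, mem_Vm]
      have := Padic.norm_le_pow_iff_norm_lt_pow_add_one ((u:ℚ_[p]) - 1) (-(m+1))
      simp only [rad]
      rw [this]
      norm_num
    rw [this]
    exact Metric.isOpen_ball.preimage Units.continuous_val

lemma isCompact_Vm (m : ℕ) : IsCompact ((Vm p m : Set ℚ_[p]ˣ)) := by
  rw [(Units.isEmbedding_val₀).isCompact_iff]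
  have himg : Units.val '' (Vm p m : Set ℚ_[p]ˣ)
      = Metric.closedBall (1:ℚ_[p]) (rad p m) := by
    apply Set.Subset.antisymm
    · rintro _ ⟨u, hu, rfl⟩
      simpa [Metric.mem_closedBall, dist_eq_norm] using (mem_Vm.mp hu)
    · intro x hx
      simp only [Metric.mem_closedBall, dist_eq_norm] at hx
      have hx1 : ‖x‖ = 1 := norm_eq_one_of_close (lt_of_le_of_lt hx (rad_lt_one m))
      have hx0 : x ≠ 0 := by intro h; rw [h] at hx1; simp at hx1
      exact ⟨Units.mk0 x hx0, hx, rfl⟩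
  rw [himg]
  exact isCompact_closedBall _ _

end C2
section C3
variable {p : ℕ} [Fact (Nat.Prime p)]

open Stmt18

noncomputable def indm (p : ℕ) [Fact (Nat.Prime p)] (m : ℕ) : SS p :=
  ⟨LocallyConstant.charFn ℂ (isClopen_Vm (p := p) m), by
    apply HasCompactSupport.of_support_subset_isCompact (isCompact_Vm m)
    intro x hx
    simp only [Function.mem_support] at hx
    by_contra hmem
    apply hx
    rw [LocallyConstant.coe_charFn]
    exact Set.indicator_of_notMem hmem _⟩

lemma indm_apply_mem {m : ℕ} {x : ℚ_[p]ˣ} (h : x ∈ Vm p m) : ((indm p m).1 : ℚ_[p]ˣ → ℂ) x = 1 := by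
  show (LocallyConstant.charFn ℂ (isClopen_Vm (p := p) m)) x = 1
  rw [LocallyConstant.coe_charFn]
  simp [Set.indicator_of_mem, h]

lemma indm_apply_not_mem {m : ℕ} {x : ℚ_[p]ˣ} (h : x ∉ Vm p m) : ((indm p m).1 : ℚ_[p]ˣ → ℂ) x = 0 := by
  show (LocallyConstant.charFn ℂ (isClopen_Vm (p := p) m)) x = 0
  rw [LocallyConstant.coe_charFn]
  simpa [Set.indicator_of_notMem, h]

lemma exists_Vm_subset {O : Set ℚ_[p]ˣ} (hO : IsOpen O) (h1 : (1:ℚ_[p]ˣ) ∈ O) :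
    ∃ m, (Vm p m : Set ℚ_[p]ˣ) ⊆ O := by
  obtain ⟨t, ht, rfl⟩ := (Units.isEmbedding_val₀.isInducing.isOpen_iff).mp hO
  have h1t : (1 : ℚ_[p]) ∈ t := h1
  obtain ⟨ε, hε, hball⟩ := Metric.isOpen_iff.mp ht 1 h1t
  obtain ⟨n, hn⟩ := exists_pow_lt_of_lt_one hε
    (show (p:ℝ)⁻¹ < 1 by rw [inv_lt_one_iff₀]; right; exact p_gt1R)
  refine ⟨n, fun u hu => ?_⟩
  apply hball
  rw [Metric.mem_ball, dist_eq_norm]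
  calc ‖(u:ℚ_[p]) - 1‖ ≤ rad p n := hu
    _ ≤ ((p:ℝ)⁻¹)^n := by
        have h1 : rad p n ≤ (p:ℝ) ^ (-(n:ℤ)) := by
          apply zpow_le_zpow_right₀ (le_of_lt p_gt1R); omega
        have h2 : (p:ℝ) ^ (-(n:ℤ)) = ((p:ℝ)⁻¹)^n := by
          rw [zpow_neg, zpow_natCast, inv_pow]
        exact h2 ▸ h1
    _ < ε := hn

lemma exists_stab (f : SS p) : ∃ m, ∀ u ∈ Vm p m, ∀ x, (f.1 : ℚ_[p]ˣ → ℂ) (u * x) = f.1 x := by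
  classical
  set F : ℚ_[p]ˣ → ℂ := (f.1 : ℚ_[p]ˣ → ℂ) with hF
  have hK : IsCompact (tsupport F) := f.2
  -- for each x, choose a level
  have key : ∀ x : ℚ_[p]ˣ, ∃ m, ∀ u ∈ Vm p m, F (u * x) = F x := by
    intro x
    have hW : IsOpen ((fun u : ℚ_[p]ˣ => u * x) ⁻¹' (F ⁻¹' {F x})) := by
      apply IsOpen.preimage (by continuity)
      exact (f.1).isLocallyConstant {F x}
    have h1 : (1:ℚ_[p]ˣ) ∈ (fun u : ℚ_[p]ˣ => u * x) ⁻¹' (F ⁻¹' {F x}) := by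
      simp
    obtain ⟨m, hm⟩ := exists_Vm_subset hW h1
    exact ⟨m, fun u hu => hm hu⟩
  choose mf hmf using key
  -- open cover of the support
  have hcov : tsupport F ⊆ ⋃ x ∈ tsupport F, {y | y * x⁻¹ ∈ Vm p (mf x)} := by
    intro x hx
    refine Set.mem_biUnion hx ?_
    simp [one_mem]
  obtain ⟨t, htcov⟩ := hK.elim_finite_subcover_image
    (fun x _ => IsOpen.preimage (by continuity) ((isClopen_Vm (mf x)).2)) hcov
  obtain ⟨hts, htfin, hcov2⟩ := htcov
  let tf : Finset ℚ_[p]ˣ := htfin.toFinset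
  set m := tf.sup mf with hm
  have hmle : ∀ x ∈ tf, mf x ≤ m := fun x hx => Finset.le_sup hx
  -- main claim for points in the union
  have main : ∀ u ∈ Vm p m, ∀ y ∈ ⋃ x ∈ t, {y | y * x⁻¹ ∈ Vm p (mf x)}, F (u * y) = F y := by
    intro u hu y hy
    obtain ⟨x, hxt, hyx⟩ := Set.mem_iUnion₂.mp hy
    have hxtf : x ∈ tf := htfin.mem_toFinset.mpr hxt
    have hsub : (Vm p m : Set ℚ_[p]ˣ) ⊆ Vm p (mf x) := Vm_antitone (hmle x hxtf)
    have hv : y * x⁻¹ ∈ Vm p (mf x) := hyx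
    have h1 : F y = F x := by
      have := hmf x (y * x⁻¹) hv
      simpa [mul_assoc] using this
    have h2 : F (u * y) = F x := by
      have huv : (u * (y * x⁻¹)) ∈ Vm p (mf x) := mul_mem (hsub hu) hv
      have := hmf x (u * (y * x⁻¹)) huv
      simpa [mul_assoc] using this
    rw [h1, h2]
  refine ⟨m, fun u hu x => ?_⟩
  by_cases hx : x ∈ ⋃ x ∈ t, {y | y * x⁻¹ ∈ Vm p (mf x)}
  · exact main u hu x hx
  · have hfx : F x = 0 := by
      apply image_eq_zero_of_notMem_tsupport
      intro hmem
      exact hx (hcov2 hmem)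
    by_cases hux : u * x ∈ ⋃ x ∈ t, {y | y * x⁻¹ ∈ Vm p (mf x)}
    · have := main u⁻¹ (inv_mem hu) (u * x) hux
      rw [inv_mul_cancel_left] at this
      exact this.symm
    · have : F (u * x) = 0 := by
        apply image_eq_zero_of_notMem_tsupport
        intro hmem
        exact hux (hcov2 hmem)
      rw [this, hfx]

end C3
section C4
variable {p : ℕ} [Fact (Nat.Prime p)]

open Stmt18

/-- Evaluation at a point, as a linear functional. -/
noncomputable def evalS (x : ℚ_[p]ˣ) : SS p →ₗ[ℂ] ℂ where
  toFun f := (f.1 : ℚ_[p]ˣ → ℂ) x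
  map_add' f g := rfl
  map_smul' c f := rfl

lemma evalS_apply (x : ℚ_[p]ˣ) (f : SS p) : evalS x f = (f.1 : ℚ_[p]ˣ → ℂ) x := rfl

lemma decomp (m : ℕ) (f : SS p)
    (hf : ∀ u ∈ Vm p m, ∀ x, (f.1 : ℚ_[p]ˣ → ℂ) (u * x) = (f.1 : ℚ_[p]ˣ → ℂ) x) :
    ∃ s : Finset ℚ_[p]ˣ,
      (∀ g ∈ s, (f.1 : ℚ_[p]ˣ → ℂ) g ≠ 0) ∧
      f = ∑ g ∈ s, ((f.1 : ℚ_[p]ˣ → ℂ) g) • translateS p g (indm p m) := by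
  classical
  set F : ℚ_[p]ˣ → ℂ := (f.1 : ℚ_[p]ˣ → ℂ) with hFdef
  have hK : IsCompact (tsupport F) := f.2
  have hUopen : ∀ i : ℚ_[p]ˣ, IsOpen {y : ℚ_[p]ˣ | i⁻¹ * y ∈ Vm p m} := by
    intro i
    exact IsOpen.preimage (by continuity) ((isClopen_Vm m).2)
  have hcov : tsupport F ⊆ ⋃ i : ℚ_[p]ˣ, {y : ℚ_[p]ˣ | i⁻¹ * y ∈ Vm p m} := by
    intro x _
    exact Set.mem_iUnion.mpr ⟨x, by simp [one_mem]⟩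
  obtain ⟨t, hcov2⟩ := hK.elim_finite_subcover _ hUopen hcov
  set Q := ℚ_[p]ˣ ⧸ Vm p m
  let π : ℚ_[p]ˣ → Q := QuotientGroup.mk
  let s0 : Finset Q := t.image π
  let s : Finset ℚ_[p]ˣ := (s0.image Quotient.out).filter (fun g => F g ≠ 0)
  -- coset membership facts
  have hQeq : ∀ g x : ℚ_[p]ˣ, g⁻¹ * x ∈ Vm p m ↔ π g = π x := by
    intro g x
    exact (QuotientGroup.eq).symm
  have hinv : ∀ g x : ℚ_[p]ˣ, g⁻¹ * x ∈ Vm p m → F x = F g := by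
    intro g x hgx
    have := hf (g⁻¹ * x) hgx g
    rw [mul_comm, ← mul_assoc, mul_inv_cancel, one_mul] at this
    exact this
  have hmem_s : ∀ g ∈ s, F g ≠ 0 := by
    intro g hg
    exact (Finset.mem_filter.mp hg).2
  refine ⟨s, hmem_s, ?_⟩
  apply Subtype.ext
  apply LocallyConstant.ext
  intro x
  have hsum : ((∑ g ∈ s, (F g) • translateS p g (indm p m)).1 : ℚ_[p]ˣ → ℂ) x
      = ∑ g ∈ s, F g * ((indm p m).1 : ℚ_[p]ˣ → ℂ) (g⁻¹ * x) := by
    have := map_sum (evalS x) (fun g => (F g) • translateS p g (indm p m)) s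
    rw [evalS_apply] at this
    rw [this]
    apply Finset.sum_congr rfl
    intro g _
    rw [map_smul, evalS_apply, smul_eq_mul, Stmt18.translate_apply]
  show F x = _
  rw [hsum]
  by_cases hx : π x ∈ s0
  · set g0 : ℚ_[p]ˣ := (π x).out with hg0
    have hπg0 : π g0 = π x := Quotient.out_eq _
    have hg0x : g0⁻¹ * x ∈ Vm p m := (hQeq g0 x).mpr hπg0
    have hFg0 : F x = F g0 := hinv g0 x hg0x
    by_cases hFx : F x = 0
    · rw [hFx]
      symm
      apply Finset.sum_eq_zero
      intro g hg
      rcases Finset.mem_filter.mp hg with ⟨hgim, hgne⟩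
      by_cases hgx : g⁻¹ * x ∈ Vm p m
      · exfalso
        obtain ⟨c, hc, hcg⟩ := Finset.mem_image.mp hgim
        have : π g = π x := (hQeq g x).mp hgx
        have hcx : c = π x := by rw [← this, ← hcg]; exact (Quotient.out_eq c).symm
        have : g = g0 := by rw [← hcg, hcx]
        apply hgne
        rw [this, ← hFg0, hFx]
      · rw [indm_apply_not_mem hgx, mul_zero]
    · have hg0s : g0 ∈ s := by
        apply Finset.mem_filter.mpr
        constructor
        · exact Finset.mem_image.mpr ⟨π x, hx, rfl⟩
        · rw [← hFg0]; exact hFx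
      rw [Finset.sum_eq_single_of_mem g0 hg0s]
      · rw [indm_apply_mem hg0x, mul_one, hFg0]
      · intro g hg hne
        by_cases hgx : g⁻¹ * x ∈ Vm p m
        · exfalso
          rcases Finset.mem_filter.mp hg with ⟨hgim, _⟩
          obtain ⟨c, hc, hcg⟩ := Finset.mem_image.mp hgim
          have : π g = π x := (hQeq g x).mp hgx
          have hcx : c = π x := by rw [← this, ← hcg]; exact (Quotient.out_eq c).symm
          exact hne (by rw [← hcg, hcx])
        · rw [indm_apply_not_mem hgx, mul_zero]
  · have hFx : F x = 0 := by
      by_contra hne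
      have hxsupp : x ∈ tsupport F := subset_tsupport F (by exact hne)
      obtain ⟨i, hit, hix⟩ := Set.mem_iUnion₂.mp (hcov2 hxsupp)
      exact hx (Finset.mem_image.mpr ⟨i, hit, (hQeq i x).mp hix⟩)
    rw [hFx]
    symm
    apply Finset.sum_eq_zero
    intro g hg
    by_cases hgx : g⁻¹ * x ∈ Vm p m
    · exfalso
      rcases Finset.mem_filter.mp hg with ⟨hgim, _⟩
      obtain ⟨c, hc, hcg⟩ := Finset.mem_image.mp hgim
      have hπ : π g = π x := (hQeq g x).mp hgx
      have : c = π x := by rw [← hπ, ← hcg]; exact (Quotient.out_eq c).symm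
      exact hx (this ▸ hc)
    · rw [indm_apply_not_mem hgx, mul_zero]

end C4
section C5
variable {p : ℕ} [Fact (Nat.Prime p)]

open Stmt18

def IsInv (χ : ℚ_[p]ˣ →* ℂˣ) (η : SS p →ₗ[ℂ] ℂ) : Prop :=
  ∀ (g : ℚ_[p]ˣ) (φ : SS p), η (translateS p g φ) = (χ g : ℂ) * η φ

lemma translate_eq_self_of_stab {φ : SS p} {m : ℕ}
    (hst : ∀ u ∈ Vm p m, ∀ x, (φ.1 : ℚ_[p]ˣ → ℂ) (u * x) = (φ.1 : ℚ_[p]ˣ → ℂ) x)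
    {u : ℚ_[p]ˣ} (hu : u ∈ Vm p m) : translateS p u φ = φ := by
  apply Subtype.ext
  apply LocallyConstant.ext
  intro x
  rw [Stmt18.translate_apply]
  exact hst u⁻¹ (inv_mem hu) x

lemma claimA {χ : ℚ_[p]ˣ →* ℂˣ} {N : ℕ} (hN : ∀ u ∈ Vm p N, (χ u : ℂ) = 1) (φ : SS p) :
    ∃ c : ℂ, ∀ η : SS p →ₗ[ℂ] ℂ, IsInv χ η → η φ = c * η (indm p N) := by
  classical
  obtain ⟨m₁, hm₁⟩ := exists_stab φ
  set m := max m₁ N with hm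
  have hφinv : ∀ u ∈ Vm p m, ∀ x, (φ.1 : ℚ_[p]ˣ → ℂ) (u * x) = (φ.1 : ℚ_[p]ˣ → ℂ) x :=
    fun u hu x => hm₁ u (Vm_antitone (le_max_left _ _) hu) x
  have hindinv : ∀ u ∈ Vm p m, ∀ x,
      ((indm p N).1 : ℚ_[p]ˣ → ℂ) (u * x) = ((indm p N).1 : ℚ_[p]ˣ → ℂ) x := by
    intro u hu x
    have huN : u ∈ Vm p N := Vm_antitone (le_max_right _ _) hu
    by_cases hx : x ∈ Vm p N
    · rw [indm_apply_mem hx, indm_apply_mem (mul_mem huN hx)]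
    · rw [indm_apply_not_mem hx, indm_apply_not_mem
        (fun h => hx ((Subgroup.mul_mem_cancel_left _ huN).mp h))]
  obtain ⟨s, hs0, hseq⟩ := decomp m φ hφinv
  obtain ⟨s2, hs20, hseq2⟩ := decomp m (indm p N) hindinv
  -- members of s2 lie in Vm p N and have value 1
  have hs2mem : ∀ g ∈ s2, g ∈ Vm p N ∧ ((indm p N).1 : ℚ_[p]ˣ → ℂ) g = 1 := by
    intro g hg
    have hne := hs20 g hg
    by_cases h : g ∈ Vm p N
    · exact ⟨h, indm_apply_mem h⟩
    · exact absurd (indm_apply_not_mem h) hne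
  -- s2 is nonempty
  have hs2ne : s2.Nonempty := by
    by_contra hemp
    rw [Finset.not_nonempty_iff_eq_empty] at hemp
    have := congrArg (fun v : SS p => (v.1 : ℚ_[p]ˣ → ℂ) 1) hseq2
    simp only [hemp, Finset.sum_empty] at this
    rw [indm_apply_mem (one_mem _)] at this
    have h0 : ((0 : SS p).1 : ℚ_[p]ˣ → ℂ) 1 = 0 := rfl
    rw [h0] at this
    exact one_ne_zero this
  have hcard : ((s2.card : ℂ)) ≠ 0 := by
    exact_mod_cast Nat.cast_ne_zero.mpr (Finset.card_ne_zero_of_mem hs2ne.choose_spec)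
  refine ⟨(∑ g ∈ s, (φ.1 : ℚ_[p]ˣ → ℂ) g * (χ g : ℂ)) / (s2.card : ℂ), ?_⟩
  intro η hη
  have hη1 : η φ = (∑ g ∈ s, (φ.1 : ℚ_[p]ˣ → ℂ) g * (χ g : ℂ)) * η (indm p m) := by
    conv_lhs => rw [hseq]
    rw [map_sum, Finset.sum_mul]
    apply Finset.sum_congr rfl
    intro g _
    rw [map_smul, smul_eq_mul, hη g, mul_assoc]
  have hη2 : η (indm p N) = (s2.card : ℂ) * η (indm p m) := by
    conv_lhs => rw [hseq2]
    rw [map_sum]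
    have : ∀ g ∈ s2, ((indm p N).1 : ℚ_[p]ˣ → ℂ) g • η (translateS p g (indm p m))
        = η (indm p m) := by
      intro g hg
      obtain ⟨hgN, hg1⟩ := hs2mem g hg
      rw [hg1, one_smul, hη g, hN g hgN, one_mul]
    calc (∑ g ∈ s2, η (((indm p N).1 : ℚ_[p]ˣ → ℂ) g • translateS p g (indm p m)))
        = ∑ g ∈ s2, η (indm p m) := by
          apply Finset.sum_congr rfl
          intro g hg
          rw [map_smul]
          exact this g hg
      _ = (s2.card : ℂ) * η (indm p m) := by
          rw [Finset.sum_const, nsmul_eq_mul]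
  rw [hη1, hη2]
  field_simp

lemma one_dim {χ : ℚ_[p]ˣ →* ℂˣ} {μχ : SS p →ₗ[ℂ] ℂ} (hμ0 : μχ ≠ 0)
    (hμ : IsInv χ μχ) {η : SS p →ₗ[ℂ] ℂ} (hη : IsInv χ η) :
    ∃ c : ℂ, ∀ φ : SS p, η φ = c * μχ φ := by
  by_cases hcont : ∃ N, ∀ u ∈ Vm p N, (χ u : ℂ) = 1
  · obtain ⟨N, hN⟩ := hcont
    have hμind : μχ (indm p N) ≠ 0 := by
      intro h0
      apply hμ0
      apply LinearMap.ext
      intro φ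
      obtain ⟨c, hc⟩ := claimA hN φ
      rw [hc μχ hμ, h0, mul_zero]
      rfl
    refine ⟨η (indm p N) / μχ (indm p N), ?_⟩
    intro φ
    obtain ⟨c, hc⟩ := claimA hN φ
    rw [hc η hη, hc μχ hμ]
    field_simp
  · exfalso
    push_neg at hcont
    apply hμ0
    apply LinearMap.ext
    intro φ
    obtain ⟨m, hm⟩ := exists_stab φ
    obtain ⟨u, hu, hchi⟩ := hcont m
    have htr : translateS p u φ = φ := translate_eq_self_of_stab hm hu
    have := hμ u φ
    rw [htr] at this
    have h2 : ((χ u : ℂ) - 1) * μχ φ = 0 := by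
      rw [sub_mul, one_mul, ← this, sub_self]
    rcases mul_eq_zero.mp h2 with h | h
    · exact absurd (by linear_combination h) hchi
    · exact h
end C5
section C6
open Polynomial

lemma descPoch_delta (j : ℕ) (x : ℂ) :
    (descPochhammer ℂ (j+1)).eval (x+1) - (descPochhammer ℂ (j+1)).eval x
      = (j+1 : ℂ) * (descPochhammer ℂ j).eval x := by
  have h1 : (descPochhammer ℂ (j+1)).eval (x+1) = (x+1) * (descPochhammer ℂ j).eval x := by
    rw [descPochhammer_succ_left]
    simp [eval_comp]
  have h2 : (descPochhammer ℂ (j+1)).eval x = (descPochhammer ℂ j).eval x * (x - j) :=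
    descPochhammer_succ_eval j x
  rw [h1, h2]
  ring

/-- discrete antiderivative -/
lemma exists_antideriv : ∀ (d : ℕ) (Q : Polynomial ℂ), Q.natDegree ≤ d →
    ∃ R : Polynomial ℂ, R.natDegree ≤ d + 1 ∧ ∀ x : ℂ, R.eval (x+1) - R.eval x = Q.eval x := by
  intro d
  induction d with
  | zero =>
    intro Q hQ
    refine ⟨Polynomial.C (Q.coeff 0) * Polynomial.X, ?_, ?_⟩
    · apply le_trans (Polynomial.natDegree_C_mul_le _ _)
      simp
    · intro x
      rw [Polynomial.eq_C_of_natDegree_le_zero hQ]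
      simp
      ring
  | succ d ih =>
    intro Q hQ
    set a := Q.coeff (d+1) with ha
    set Q' := Q - Polynomial.C a * descPochhammer ℂ (d+1) with hQ'
    have hQ'deg : Q'.natDegree ≤ d := by
      rw [Polynomial.natDegree_le_iff_coeff_eq_zero]
      intro N hN
      rw [hQ', Polynomial.coeff_sub, Polynomial.coeff_C_mul]
      rcases Nat.lt_or_ge (d+1) N with h | h
      · rw [Polynomial.coeff_eq_zero_of_natDegree_lt (lt_of_le_of_lt hQ h),
          Polynomial.coeff_eq_zero_of_natDegree_lt]
        · ring
        · rw [descPochhammer_natDegree]; exact h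
      · have hN1 : N = d + 1 := le_antisymm h hN
        rw [hN1, ← ha]
        have : (descPochhammer ℂ (d+1)).coeff (d+1) = 1 := by
          have hm := monic_descPochhammer ℂ (d+1)
          have := hm.leadingCoeff
          rwa [Polynomial.leadingCoeff, descPochhammer_natDegree] at this
        rw [this, mul_one, sub_self]
    obtain ⟨R', hR'deg, hR'⟩ := ih Q' hQ'deg
    refine ⟨R' + Polynomial.C (a / (d+2)) * descPochhammer ℂ (d+2), ?_, ?_⟩
    · apply le_trans (Polynomial.natDegree_add_le _ _)
      rw [max_le_iff]
      constructor
      · omega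
      · apply le_trans (Polynomial.natDegree_C_mul_le _ _)
        rw [descPochhammer_natDegree]
    · intro x
      simp only [Polynomial.eval_add, Polynomial.eval_mul, Polynomial.eval_C]
      have hd := descPoch_delta (d+1) x
      have h2 : (d:ℂ) + 2 ≠ 0 := by
        have h3 : ((d+2 : ℕ):ℂ) ≠ 0 := Nat.cast_ne_zero.mpr (by omega)
        push_cast at h3
        exact h3
      have hQx : Q.eval x = Q'.eval x + a * (descPochhammer ℂ (d+1)).eval x := by
        rw [hQ']
        simp only [Polynomial.eval_sub, Polynomial.eval_mul, Polynomial.eval_C]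
        ring
      rw [hQx, ← hR' x]
      have : a / (d+2) * ((descPochhammer ℂ (d+2)).eval (x+1))
          - a / (d+2) * ((descPochhammer ℂ (d+2)).eval x)
          = a * (descPochhammer ℂ (d+1)).eval x := by
        rw [← mul_sub]
        have : ((d:ℂ)+1+1) = (d:ℂ)+2 := by ring
        rw [show (d+2) = (d+1)+1 from rfl, descPoch_delta (d+1) x]
        push_cast
        field_simp
        ring
      linear_combination this
end C6
section C7
open Polynomial

noncomputable def fdiff (h : ℤ → ℂ) : ℤ → ℂ := fun n => h (n+1) - h n

lemma poly_of_fd : ∀ (k : ℕ) (h : ℤ → ℂ), fdiff^[k+1] h = 0 →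
    ∃ P : Polynomial ℂ, P.natDegree ≤ k ∧ ∀ n : ℤ, h n = P.eval (n:ℂ) := by
  intro k
  induction k with
  | zero =>
    intro h hh
    have hd : ∀ n : ℤ, h (n+1) = h n := by
      intro n
      have := congrFun hh n
      simp only [Function.iterate_one, fdiff, Pi.zero_apply] at this
      exact sub_eq_zero.mp this
    refine ⟨Polynomial.C (h 0), by simp, ?_⟩
    intro n
    rw [Polynomial.eval_C]
    induction n using Int.induction_on with
    | zero => rfl
    | succ i hi => rw [hd i, hi]
    | pred i hi => rw [← hi, ← hd (-(i:ℤ) - 1)]; norm_num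
  | succ k ih =>
    intro h hh
    have hh' : fdiff^[k+1] (fdiff h) = 0 := by
      rw [← Function.iterate_succ_apply]
      exact hh
    obtain ⟨Q, hQdeg, hQ⟩ := ih (fdiff h) hh'
    obtain ⟨R, hRdeg, hR⟩ := exists_antideriv k Q hQdeg
    refine ⟨R + Polynomial.C (h 0 - R.eval 0), ?_, ?_⟩
    · apply le_trans (Polynomial.natDegree_add_le _ _)
      simp only [Polynomial.natDegree_C]
      omega
    · intro n
      have key : ∀ n : ℤ, h (n+1) - h n = R.eval (((n:ℤ):ℂ)+1) - R.eval ((n:ℤ):ℂ) := by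
        intro n
        rw [hR ((n:ℤ):ℂ)]
        exact hQ n ▸ rfl
      simp only [Polynomial.eval_add, Polynomial.eval_C]
      induction n using Int.induction_on with
      | zero => simp
      | succ i hi =>
        have hk := key (i:ℤ)
        have hc : (((i:ℤ)+1 : ℤ):ℂ) = ((i:ℤ):ℂ) + 1 := by push_cast; ring
        rw [hc]
        linear_combination hk + hi
      | pred i hi =>
        have hk := key (-(i:ℤ)-1)
        have harg : (-(i:ℤ)-1) + 1 = -(i:ℤ) := by ring
        rw [harg] at hk
        have hc2 : (((-(i:ℤ)-1) : ℤ):ℂ) + 1 = ((-(i:ℤ) : ℤ):ℂ) := by push_cast; ring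
        rw [hc2] at hk
        linear_combination hi - hk
    
lemma const_of_periodic (P : Polynomial ℂ) (M : ℕ) (hM : 1 ≤ M) (β : ℂ) (hβ : β ≠ 0)
    (hper : ∀ n : ℤ, P.eval ((n:ℂ) + M) = β * P.eval (n:ℂ)) : ∃ c, P = Polynomial.C c := by
  by_cases hP : P = 0
  · exact ⟨0, by simp [hP]⟩
  have hcomp : P.comp (Polynomial.X + Polynomial.C (M:ℂ)) = Polynomial.C β * P := by
    apply Polynomial.eq_of_infinite_eval_eq
    apply Set.infinite_of_injective_forall_mem
      (f := fun n : ℤ => (n:ℂ)) (fun a b hab => by simp only at hab; exact_mod_cast hab)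
    intro n
    simp only [Set.mem_setOf_eq, Polynomial.eval_comp, Polynomial.eval_add, Polynomial.eval_X,
      Polynomial.eval_C, Polynomial.eval_mul]
    exact hper n
  have hβ1 : β = 1 := by
    have h1 : (P.comp (Polynomial.X + Polynomial.C (M:ℂ))).leadingCoeff = P.leadingCoeff := by
      rw [Polynomial.leadingCoeff_comp (by rw [Polynomial.natDegree_X_add_C]; omega)]
      rw [Polynomial.leadingCoeff_X_add_C]
      simp
    have h2 : (Polynomial.C β * P).leadingCoeff = β * P.leadingCoeff := by
      rw [Polynomial.leadingCoeff_mul, Polynomial.leadingCoeff_C]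
    rw [hcomp, h2] at h1
    have hlc := Polynomial.leadingCoeff_ne_zero.mpr hP
    have h3 : (β - 1) * P.leadingCoeff = 0 := by linear_combination h1
    rcases mul_eq_zero.mp h3 with h | h
    · exact sub_eq_zero.mp h
    · exact absurd h hlc
  subst hβ1
  have hshift : ∀ x : ℂ, P.eval (x + M) = P.eval x := by
    intro x
    have := congrArg (Polynomial.eval x) hcomp
    simpa [Polynomial.eval_comp] using this
  have hroots : ∀ j : ℕ, P.eval ((j * M : ℕ) : ℂ) = P.eval 0 := by
    intro j
    induction j with
    | zero => simp
    | succ j hj =>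
      have : (((j+1) * M : ℕ) : ℂ) = ((j * M : ℕ):ℂ) + M := by push_cast; ring
      rw [this, hshift, hj]
  refine ⟨P.eval 0, ?_⟩
  have hzero : P - Polynomial.C (P.eval 0) = 0 := by
    apply Polynomial.eq_zero_of_infinite_isRoot
    apply Set.infinite_of_injective_forall_mem (f := fun j : ℕ => ((j * M : ℕ) : ℂ))
    · intro a b hab
      simp only at hab
      have : (a * M : ℕ) = b * M := by exact_mod_cast hab
      exact Nat.eq_of_mul_eq_mul_right (by omega) this
    · intro j
      simp only [Set.mem_setOf_eq, Polynomial.IsRoot, Polynomial.eval_sub, Polynomial.eval_C]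
      rw [hroots j, sub_self]
  linear_combination hzero

end C7
section C8
variable {p : ℕ} [Fact (Nat.Prime p)]

open Stmt18

noncomputable def Bop (χ : ℚ_[p]ˣ →* ℂˣ) (g : ℚ_[p]ˣ) (η : SS p →ₗ[ℂ] ℂ) : SS p →ₗ[ℂ] ℂ :=
  η.comp (translateS p g) - (χ g : ℂ) • η

lemma Bop_apply (χ : ℚ_[p]ˣ →* ℂˣ) (g : ℚ_[p]ˣ) (η : SS p →ₗ[ℂ] ℂ) (φ : SS p) :
    Bop χ g η φ = η (translateS p g φ) - (χ g : ℂ) * η φ := rfl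

lemma foldr_replicate {α β : Type*} (f : α → β → β) (g : α) (n : ℕ) (b : β) :
    List.foldr f b (List.replicate n g) = (f g)^[n] b := by
  induction n with
  | zero => rfl
  | succ n ih =>
    rw [List.replicate_succ, List.foldr_cons, ih]
    exact (Function.iterate_succ_apply' (f g) n b).symm

noncomputable def seqF (χ : ℚ_[p]ˣ →* ℂˣ) (η : SS p →ₗ[ℂ] ℂ) (g : ℚ_[p]ˣ) (φ : SS p) :
    ℤ → ℂ :=
  fun n => (((χ g) ^ (-n) : ℂˣ) : ℂ) * η (translateS p (g ^ n) φ)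

lemma translate_zpow_succ (g : ℚ_[p]ˣ) (n : ℤ) (φ : SS p) :
    translateS p (g ^ (n+1)) φ = translateS p g (translateS p (g ^ n) φ) := by
  rw [Stmt18.translate_mul, ← zpow_one_add]
  ring_nf

lemma fdiff_seqF (χ : ℚ_[p]ˣ →* ℂˣ) (η : SS p →ₗ[ℂ] ℂ) (g : ℚ_[p]ˣ) (φ : SS p) :
    fdiff (seqF χ η g φ) = fun n => (((χ g)⁻¹ : ℂˣ) : ℂ) * seqF χ (Bop χ g η) g φ n := by
  funext n
  simp only [fdiff, seqF, Bop_apply]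
  rw [translate_zpow_succ]
  have hc : (((χ g) ^ (-(n+1)) : ℂˣ) : ℂ)
      = (((χ g)⁻¹ : ℂˣ) : ℂ) * (((χ g) ^ (-n) : ℂˣ) : ℂ) := by
    rw [← Units.val_mul]
    congr 1
    rw [← zpow_neg_one, ← zpow_add]
    congr 1
    ring
  rw [hc]
  have hu : (((χ g)⁻¹ : ℂˣ) : ℂ) * ((χ g : ℂˣ) : ℂ) = 1 := by
    rw [← Units.val_mul, inv_mul_cancel, Units.val_one]
  linear_combination ((((χ g) ^ (-n) : ℂˣ) : ℂ) * η (translateS p (g ^ n) φ)) * hu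

lemma fdiff_iter_seqF (χ : ℚ_[p]ˣ →* ℂˣ) (g : ℚ_[p]ˣ) (φ : SS p) (j : ℕ)
    (η : SS p →ₗ[ℂ] ℂ) :
    fdiff^[j] (seqF χ η g φ)
      = fun n => ((((χ g)⁻¹ : ℂˣ) : ℂ) ^ j) * seqF χ ((Bop χ g)^[j] η) g φ n := by
  induction j generalizing η with
  | zero => simp
  | succ j ih =>
    rw [Function.iterate_succ_apply, fdiff_seqF]
    have : (fun n => (((χ g)⁻¹ : ℂˣ) : ℂ) * seqF χ (Bop χ g η) g φ n)
        = (((χ g)⁻¹ : ℂˣ) : ℂ) • seqF χ (Bop χ g η) g φ := rfl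
    rw [this]
    have hone : ∀ (c : ℂ) (f : ℤ → ℂ), fdiff (c • f) = c • fdiff f := by
      intro c f
      funext n
      simp only [fdiff, Pi.smul_apply, smul_eq_mul]
      ring
    have hsmul : ∀ (j : ℕ) (c : ℂ) (f : ℤ → ℂ), fdiff^[j] (c • f) = c • fdiff^[j] f := by
      intro j
      induction j with
      | zero => intro c f; rfl
      | succ j ihj =>
        intro c f
        rw [Function.iterate_succ_apply, Function.iterate_succ_apply, hone, ihj]
    rw [hsmul _ _ _, ih ((Bop χ g) η)]
    funext n
    simp only [Pi.smul_apply, smul_eq_mul, Function.iterate_succ_apply]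
    ring

end C8
section C9
variable {p : ℕ} [Fact (Nat.Prime p)]

open Stmt18

lemma pow_card_mem_Vm {u : ℚ_[p]ˣ} (hu : ‖(u:ℚ_[p])‖ = 1) (m : ℕ) :
    haveI : NeZero (p^(m+1)) := ⟨pow_ne_zero _ (Nat.Prime.ne_zero Fact.out)⟩
    u ^ (Fintype.card (ZMod (p^(m+1)))ˣ) ∈ Vm p m := by
  haveI : NeZero (p^(m+1)) := ⟨pow_ne_zero _ (Nat.Prime.ne_zero Fact.out)⟩
  set M := Fintype.card (ZMod (p^(m+1)))ˣ with hM
  set z : ℤ_[p] := ⟨(u:ℚ_[p]), le_of_eq hu⟩ with hz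
  have hznorm : ‖z‖ = 1 := hu
  have hzu : IsUnit z := PadicInt.isUnit_iff.mpr hznorm
  set w : ℤ_[p]ˣ := hzu.unit with hw
  have hwz : (w : ℤ_[p]) = z := IsUnit.unit_spec hzu
  set ψ := PadicInt.toZModPow (p := p) (m+1) with hψ
  set v : (ZMod (p^(m+1)))ˣ := Units.map ψ.toMonoidHom w with hv
  have hv1 : v ^ M = 1 := pow_card_eq_one
  have hψz : ψ (z ^ M) = 1 := by
    have h4 : ((v ^ M : (ZMod (p^(m+1)))ˣ) : ZMod (p^(m+1))) = ψ (z ^ M) := by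
      rw [hv, ← map_pow, Units.coe_map]
      simp only [RingHom.toMonoidHom_eq_coe, MonoidHom.coe_coe]
      rw [Units.val_pow_eq_pow_val, hwz]
    rw [← h4, hv1, Units.val_one]
  have hker : z ^ M - 1 ∈ RingHom.ker ψ := by
    rw [RingHom.mem_ker, map_sub, map_one, hψz, sub_self]
  rw [hψ, PadicInt.ker_toZModPow] at hker
  have hnorm : ‖z ^ M - 1‖ ≤ (p:ℝ) ^ (-((m+1 : ℕ)) : ℤ) :=
    (PadicInt.norm_le_pow_iff_mem_span_pow _ _).mpr hker
  rw [mem_Vm]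
  have hcoe : ((u ^ M : ℚ_[p]ˣ) : ℚ_[p]) - 1 = ((z ^ M - 1 : ℤ_[p]) : ℚ_[p]) := by
    rw [PadicInt.coe_sub, PadicInt.coe_pow, PadicInt.coe_one, Units.val_pow_eq_pow_val]
  rw [hcoe]
  rw [← PadicInt.norm_def] at *
  calc ‖z ^ M - 1‖ ≤ (p:ℝ) ^ (-((m+1 : ℕ)) : ℤ) := hnorm
    _ = rad p m := by rw [rad]; norm_cast

lemma seq_poly {χ : ℚ_[p]ˣ →* ℂˣ} {ξ : SS p →ₗ[ℂ] ℂ} {k : ℕ}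
    (hξ : ∀ l : List ℚ_[p]ˣ, l.length = k + 1 →
      l.foldr (fun g η => η.comp (translateS p g) - (χ g : ℂ) • η) ξ = 0)
    (g : ℚ_[p]ˣ) (φ : SS p) :
    ∃ P : Polynomial ℂ, P.natDegree ≤ k ∧ ∀ n : ℤ, seqF χ ξ g φ n = P.eval (n:ℂ) := by
  have hfold := hξ (List.replicate (k+1) g) (by simp)
  rw [foldr_replicate] at hfold
  have hiter : (Bop χ g)^[k+1] ξ = 0 := hfold
  apply poly_of_fd
  rw [fdiff_iter_seqF, hiter]
  funext n
  simp [seqF]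

lemma unit_inv {χ : ℚ_[p]ˣ →* ℂˣ} {ξ : SS p →ₗ[ℂ] ℂ} {k : ℕ}
    (hξ : ∀ l : List ℚ_[p]ˣ, l.length = k + 1 →
      l.foldr (fun g η => η.comp (translateS p g) - (χ g : ℂ) • η) ξ = 0)
    {u : ℚ_[p]ˣ} (hu : ‖(u:ℚ_[p])‖ = 1) (φ : SS p) :
    ξ (translateS p u φ) = (χ u : ℂ) * ξ φ := by
  obtain ⟨m, hm⟩ := exists_stab φ
  haveI : NeZero (p^(m+1)) := ⟨pow_ne_zero _ (Nat.Prime.ne_zero Fact.out)⟩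
  set M := Fintype.card (ZMod (p^(m+1)))ˣ with hMdef
  have hM1 : 1 ≤ M := Fintype.card_pos
  have huM : u ^ M ∈ Vm p m := pow_card_mem_Vm hu m
  obtain ⟨P, _, hP⟩ := seq_poly hξ u φ
  -- periodicity
  have hper : ∀ n : ℤ, seqF χ ξ u φ (n + M)
      = (((χ u) ^ (-(M:ℤ)) : ℂˣ) : ℂ) * seqF χ ξ u φ n := by
    intro n
    simp only [seqF]
    have h1 : u ^ (n + (M:ℤ)) = u ^ (M:ℤ) * u ^ n := by
      rw [zpow_add]; exact mul_comm _ _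
    have h2 : translateS p (u ^ (n + (M:ℤ))) φ = translateS p (u ^ n) φ := by
      rw [h1, mul_comm, ← Stmt18.translate_mul]
      congr 1
      have : u ^ (M:ℤ) = u ^ M := zpow_natCast u M
      rw [this]
      exact translate_eq_self_of_stab hm huM
    rw [h2]
    have h3 : ((χ u) ^ (-(n + (M:ℤ))) : ℂˣ)
        = ((χ u) ^ (-(M:ℤ)) : ℂˣ) * ((χ u) ^ (-n) : ℂˣ) := by
      rw [← zpow_add]
      congr 1
      ring
    rw [h3, Units.val_mul]
    ring
  have hperP : ∀ n : ℤ, P.eval ((n:ℂ) + (M:ℕ)) = (((χ u) ^ (-(M:ℤ)) : ℂˣ) : ℂ) * P.eval (n:ℂ) := by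
    intro n
    have := hper n
    rw [hP (n + M), hP n] at this
    have hc : (((n + (M:ℤ)) : ℤ) : ℂ) = (n:ℂ) + (M:ℕ) := by push_cast; ring
    rw [hc] at this
    exact this
  obtain ⟨c, hc⟩ := const_of_periodic P M hM1 _ (Units.ne_zero _) hperP
  have hs1 : seqF χ ξ u φ 1 = c := by rw [hP 1, hc]; simp
  have hs0 : seqF χ ξ u φ 0 = c := by rw [hP 0, hc]; simp
  have heq := hs1.trans hs0.symm
  simp only [seqF] at heq
  rw [zpow_one, zpow_zero, translate_one] at heq
  have hval : (((χ u) ^ (-(1:ℤ)) : ℂˣ) : ℂ) = ((χ u : ℂ))⁻¹ := by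
    rw [zpow_neg, zpow_one]
    exact Units.val_inv_eq_inv_val _
  rw [hval] at heq
  have hne : ((χ u : ℂ)) ≠ 0 := Units.ne_zero _
  field_simp at heq
  rw [heq]
  simp
end C9
section C10
variable {p : ℕ} [Fact (Nat.Prime p)]

open Stmt18

lemma norm_eq_of_close' {x y : ℚ_[p]} (h : ‖y - x‖ < ‖x‖) : ‖y‖ = ‖x‖ := by
  have h1 : ‖y‖ ≤ ‖x‖ := by
    calc ‖y‖ = ‖(y - x) + x‖ := by ring_nf
    _ ≤ max ‖y - x‖ ‖x‖ := IsUltrametricDist.norm_add_le_max _ _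
    _ ≤ ‖x‖ := max_le (le_of_lt h) le_rfl
  have h2 : ‖x‖ ≤ ‖y‖ := by
    have : ‖x‖ ≤ max ‖y‖ ‖y - x‖ := by
      calc ‖x‖ = ‖y + -(y - x)‖ := by ring_nf
      _ ≤ max ‖y‖ ‖-(y - x)‖ := IsUltrametricDist.norm_add_le_max _ _
      _ = max ‖y‖ ‖y - x‖ := by rw [norm_neg]
    rcases le_max_iff.mp this with h' | h'
    · exact h'
    · linarith
  linarith

lemma padic_val_eq_of_norm_eq {x y : ℚ_[p]} (hx : x ≠ 0) (hy : y ≠ 0) (h : ‖x‖ = ‖y‖) :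
    x.valuation = y.valuation := by
  rw [Padic.norm_eq_zpow_neg_valuation hx, Padic.norm_eq_zpow_neg_valuation hy] at h
  have hmono : StrictMono (fun n : ℤ => (p:ℝ)^n) := fun a b hab => by
    exact zpow_lt_zpow_right₀ p_gt1R hab
  have := hmono.injective h
  omega

/-- the complex-valued valuation function on units -/
noncomputable def valC (x : ℚ_[p]ˣ) : ℂ := (((x : ℚ_[p]).valuation : ℤ) : ℂ)

lemma isLocallyConstant_valC : IsLocallyConstant (valC (p := p)) := by
  rw [IsLocallyConstant.iff_exists_open]
  intro x
  refine ⟨{y : ℚ_[p]ˣ | ‖(y:ℚ_[p]) - (x:ℚ_[p])‖ < ‖(x:ℚ_[p])‖}, ?_, ?_, ?_⟩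
  · have : {y : ℚ_[p]ˣ | ‖(y:ℚ_[p]) - (x:ℚ_[p])‖ < ‖(x:ℚ_[p])‖}
        = Units.val ⁻¹' (Metric.ball (x:ℚ_[p]) ‖(x:ℚ_[p])‖) := by
      ext y
      simp [Metric.mem_ball, dist_eq_norm]
    rw [this]
    exact Metric.isOpen_ball.preimage Units.continuous_val
  · simp only [Set.mem_setOf_eq, sub_self, norm_zero]
    exact norm_pos_iff.mpr (Units.ne_zero x)
  · intro y hy
    simp only [Set.mem_setOf_eq] at hy
    unfold valC
    have := padic_val_eq_of_norm_eq (Units.ne_zero y) (Units.ne_zero x) (norm_eq_of_close' hy)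
    rw [this]

noncomputable def valLC : LocallyConstant ℚ_[p]ˣ ℂ := ⟨valC, isLocallyConstant_valC⟩

/-- multiplication by `P (val ·)` as a linear map on Schwartz space -/
noncomputable def mulVal (P : Polynomial ℂ) : SS p →ₗ[ℂ] SS p where
  toFun f := ⟨(valLC.map (fun t => P.eval t)) * f.1, by
    apply HasCompactSupport.mul_left
    exact f.2⟩
  map_add' f g := by
    apply Subtype.ext
    apply LocallyConstant.ext
    intro x
    show _ * ((f.1 : ℚ_[p]ˣ → ℂ) x + (g.1 : ℚ_[p]ˣ → ℂ) x) = _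
    ring_nf
    rfl
  map_smul' c f := by
    apply Subtype.ext
    apply LocallyConstant.ext
    intro x
    show _ * (c * (f.1 : ℚ_[p]ˣ → ℂ) x) = c * (_ * (f.1 : ℚ_[p]ˣ → ℂ) x)
    ring

lemma mulVal_apply (P : Polynomial ℂ) (f : SS p) (x : ℚ_[p]ˣ) :
    ((mulVal P f).1 : ℚ_[p]ˣ → ℂ) x = P.eval (valC x) * (f.1 : ℚ_[p]ˣ → ℂ) x := rfl

lemma valC_unit_mul {u : ℚ_[p]ˣ} (hu : ‖(u:ℚ_[p])‖ = 1) (x : ℚ_[p]ˣ) :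
    valC (u * x) = valC x := by
  unfold valC
  have h : ‖((u * x : ℚ_[p]ˣ) : ℚ_[p])‖ = ‖(x : ℚ_[p])‖ := by
    rw [Units.val_mul, norm_mul, hu, one_mul]
  rw [padic_val_eq_of_norm_eq (Units.ne_zero _) (Units.ne_zero _) h]

lemma valC_p_mul (pu : ℚ_[p]ˣ) (hpu : (pu : ℚ_[p]) = (p:ℚ_[p])) (x : ℚ_[p]ˣ) :
    valC (pu * x) = valC x + 1 := by
  unfold valC
  have hp0 : ((p:ℕ) : ℚ_[p]) ≠ 0 := by
    exact_mod_cast Nat.cast_ne_zero.mpr (Nat.Prime.ne_zero (Fact.out : Nat.Prime p))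
  have h : ((pu * x : ℚ_[p]ˣ) : ℚ_[p]).valuation = (x:ℚ_[p]).valuation + 1 := by
    rw [Units.val_mul, hpu, Padic.valuation_mul hp0 (Units.ne_zero x), Padic.valuation_p]
    ring
  rw [h]
  push_cast
  ring

end C10
section C11
variable {p : ℕ} [Fact (Nat.Prime p)]

open Stmt18

lemma mulVal_translate_unit (P : Polynomial ℂ) {u : ℚ_[p]ˣ} (hu : ‖(u:ℚ_[p])‖ = 1) (φ : SS p) :
    mulVal P (translateS p u φ) = translateS p u (mulVal P φ) := by
  apply Subtype.ext
  apply LocallyConstant.ext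
  intro x
  rw [Stmt18.translate_apply]
  rw [mulVal_apply, mulVal_apply, Stmt18.translate_apply]
  have hinv : ‖((u⁻¹ : ℚ_[p]ˣ):ℚ_[p])‖ = 1 := by
    rw [Units.val_inv_eq_inv_val, norm_inv, hu, inv_one]
  rw [valC_unit_mul hinv x]

lemma mulVal_translate_p (P : Polynomial ℂ) (pu : ℚ_[p]ˣ) (hpu : (pu : ℚ_[p]) = (p:ℚ_[p]))
    (φ : SS p) :
    mulVal P (translateS p pu φ)
      = translateS p pu (mulVal (P.comp (Polynomial.X + Polynomial.C 1)) φ) := by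
  apply Subtype.ext
  apply LocallyConstant.ext
  intro x
  rw [Stmt18.translate_apply, mulVal_apply, mulVal_apply, Stmt18.translate_apply]
  congr 1
  rw [Polynomial.eval_comp]
  simp only [Polynomial.eval_add, Polynomial.eval_X, Polynomial.eval_C]
  congr 1
  have := valC_p_mul pu hpu (pu⁻¹ * x)
  rw [← mul_assoc, mul_inv_cancel, one_mul] at this
  rw [this]

lemma mulVal_add (P Q : Polynomial ℂ) (φ : SS p) :
    mulVal (P + Q) φ = mulVal P φ + mulVal Q φ := by
  apply Subtype.ext
  apply LocallyConstant.ext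
  intro x
  show ((mulVal (P + Q) φ).1 : ℚ_[p]ˣ → ℂ) x
      = (mulVal P φ).1 x + (mulVal Q φ).1 x
  rw [mulVal_apply, mulVal_apply, mulVal_apply, Polynomial.eval_add]
  ring

lemma mulVal_C (c : ℂ) (φ : SS p) : mulVal (Polynomial.C c) φ = c • φ := by
  apply Subtype.ext
  apply LocallyConstant.ext
  intro x
  rw [mulVal_apply, Polynomial.eval_C]
  rfl

lemma mulVal_C_mul (c : ℂ) (Q : Polynomial ℂ) (φ : SS p) :
    mulVal (Polynomial.C c * Q) φ = c • (mulVal Q φ) := by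
  apply Subtype.ext
  apply LocallyConstant.ext
  intro x
  rw [mulVal_apply]
  show _ = c * ((mulVal Q φ).1 : ℚ_[p]ˣ → ℂ) x
  rw [mulVal_apply, Polynomial.eval_mul, Polynomial.eval_C]
  ring
end C11
section C12
variable {p : ℕ} [Fact (Nat.Prime p)]

open Stmt18

lemma main_induction (χ : ℚ_[p]ˣ →* ℂˣ) (μχ : SS p →ₗ[ℂ] ℂ) (hμ0 : μχ ≠ 0)
    (hμ : IsInv χ μχ) :
    ∀ (k : ℕ) (ξ : SS p →ₗ[ℂ] ℂ),
      (∀ l : List ℚ_[p]ˣ, l.length = k + 1 →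
        l.foldr (fun g η => η.comp (translateS p g) - (χ g : ℂ) • η) ξ = 0) →
      ∃ P : Polynomial ℂ, P.natDegree ≤ k ∧ ∀ φ, ξ φ = μχ (mulVal P φ) := by
  intro k
  induction k with
  | zero =>
    intro ξ hξ
    have hinv : IsInv χ ξ := by
      intro g φ
      have h0 := hξ [g] rfl
      rw [List.foldr_cons, List.foldr_nil] at h0
      have h1 := LinearMap.congr_fun h0 φ
      have h2 : ξ (translateS p g φ) - (χ g : ℂ) * ξ φ = 0 := h1
      linear_combination h2
    obtain ⟨c, hc⟩ := one_dim hμ0 hμ hinv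
    refine ⟨Polynomial.C c, by simp, ?_⟩
    intro φ
    rw [hc φ, mulVal_C, map_smul, smul_eq_mul]
  | succ k ih =>
    intro ξ hξ
    have hp0 : ((p:ℕ) : ℚ_[p]) ≠ 0 := by
      exact_mod_cast Nat.cast_ne_zero.mpr (Nat.Prime.ne_zero (Fact.out : Nat.Prime p))
    set pu : ℚ_[p]ˣ := Units.mk0 ((p:ℕ) : ℚ_[p]) hp0 with hpu_def
    have hpu : (pu : ℚ_[p]) = ((p:ℕ) : ℚ_[p]) := rfl
    set a : ℂ := ((χ pu : ℂˣ) : ℂ) with ha_def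
    have ha : a ≠ 0 := Units.ne_zero _
    set ξ' := Bop χ pu ξ with hξ'def
    have hξ' : ∀ l : List ℚ_[p]ˣ, l.length = k + 1 →
        l.foldr (fun g η => η.comp (translateS p g) - (χ g : ℂ) • η) ξ' = 0 := by
      intro l hl
      have := hξ (l ++ [pu]) (by simp [hl])
      rw [List.foldr_append, List.foldr_cons, List.foldr_nil] at this
      exact this
    obtain ⟨Q, hQdeg, hQ⟩ := ih ξ' hξ'
    obtain ⟨R, hRdeg, hR⟩ := exists_antideriv k (Polynomial.C a⁻¹ * Q)
      (le_trans (Polynomial.natDegree_C_mul_le _ _) hQdeg)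
    set ν : SS p →ₗ[ℂ] ℂ := ξ - μχ.comp (mulVal R) with hνdef
    have hν_apply : ∀ φ, ν φ = ξ φ - μχ (mulVal R φ) := fun φ => rfl
    -- R shifted
    have hpoly : R.comp (Polynomial.X + Polynomial.C 1) = R + Polynomial.C a⁻¹ * Q := by
      apply Polynomial.funext
      intro x
      rw [Polynomial.eval_comp]
      simp only [Polynomial.eval_add, Polynomial.eval_X, Polynomial.eval_C, Polynomial.eval_mul]
      have := hR x
      simp only [Polynomial.eval_mul, Polynomial.eval_C] at this
      linear_combination this
    have hν_unit : ∀ u : ℚ_[p]ˣ, ‖(u:ℚ_[p])‖ = 1 → ∀ φ,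
        ν (translateS p u φ) = (χ u : ℂ) * ν φ := by
      intro u hu φ
      rw [hν_apply, hν_apply, unit_inv hξ hu φ, mulVal_translate_unit R hu φ,
        hμ u (mulVal R φ)]
      ring
    have hν_p : ∀ φ, ν (translateS p pu φ) = a * ν φ := by
      intro φ
      have h1 : ξ (translateS p pu φ) = ξ' φ + a * ξ φ := by
        rw [hξ'def, Bop_apply]; ring
      have h2 : μχ (mulVal R (translateS p pu φ))
          = a * μχ (mulVal R φ) + μχ (mulVal Q φ) := by
        rw [mulVal_translate_p R pu hpu φ, hμ pu, hpoly, mulVal_add, mulVal_C_mul, map_add,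
          map_smul, smul_eq_mul]
        rw [← ha_def]
        field_simp
      rw [hν_apply, hν_apply, h1, h2, hQ φ]
      ring
    have hν_zpow : ∀ (n : ℤ) (φ : SS p),
        ν (translateS p (pu ^ n) φ) = (((χ pu) ^ n : ℂˣ) : ℂ) * ν φ := by
      intro n
      induction n using Int.induction_on with
      | zero => intro φ; rw [zpow_zero, translate_one]; simp
      | succ i hi =>
        intro φ
        have := translate_zpow_succ pu (i:ℤ) φ
        rw [this, hν_p, hi φ]
        have : ((χ pu) ^ ((i:ℤ)+1) : ℂˣ) = (χ pu) * ((χ pu) ^ (i:ℤ) : ℂˣ) := by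
          rw [← zpow_one_add]; ring_nf
        rw [this, Units.val_mul, ← ha_def]
        ring
      | pred i hi =>
        intro φ
        have hstep := translate_zpow_succ pu (-(i:ℤ)-1) φ
        have harg : (-(i:ℤ)-1) + 1 = -(i:ℤ) := by ring
        rw [harg] at hstep
        have h1 := hν_p (translateS p (pu ^ (-(i:ℤ)-1)) φ)
        rw [← hstep, hi φ] at h1
        have hz : ((χ pu) ^ (-(i:ℤ)) : ℂˣ) = (χ pu) * ((χ pu) ^ (-(i:ℤ)-1) : ℂˣ) := by
          rw [← zpow_one_add]; ring_nf
        rw [hz, Units.val_mul, ← ha_def, mul_assoc] at h1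
        exact (mul_left_cancel₀ ha h1).symm
    have hν_inv : IsInv χ ν := by
      intro g φ
      set n : ℤ := (g : ℚ_[p]).valuation with hn
      set u : ℚ_[p]ˣ := g * pu ^ (-n) with hu_def
      have hu : ‖(u:ℚ_[p])‖ = 1 := by
        rw [hu_def, Units.val_mul, Units.val_zpow_eq_zpow_val, hpu, norm_mul,
          Padic.norm_p_zpow, Padic.norm_eq_zpow_neg_valuation (Units.ne_zero g), ← hn]
        rw [← zpow_add₀ (ne_of_gt (by have := p_gt1R (p := p); linarith : (0:ℝ) < (p:ℝ)))]
        norm_num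
      have hgu : g = u * pu ^ n := by
        rw [hu_def, mul_assoc, ← zpow_add]
        norm_num
      have hχg : ((χ g : ℂˣ) : ℂ) = ((χ u : ℂˣ) : ℂ) * (((χ pu) ^ n : ℂˣ) : ℂ) := by
        rw [hgu, map_mul, map_zpow, Units.val_mul]
      rw [hχg]
      conv_lhs => rw [hgu]
      rw [← Stmt18.translate_mul, hν_unit u hu, hν_zpow n φ]
      ring
    obtain ⟨c, hc⟩ := one_dim hμ0 hμ hν_inv
    refine ⟨R + Polynomial.C c, ?_, ?_⟩
    · apply le_trans (Polynomial.natDegree_add_le _ _)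
      simp only [Polynomial.natDegree_C]
      omega
    · intro φ
      have h1 : ξ φ = ν φ + μχ (mulVal R φ) := by rw [hν_apply]; ring
      rw [h1, hc φ, mulVal_add, mulVal_C, map_add, map_smul, smul_eq_mul]
      ring
end C12
/-- Every generalized `χ`-invariant distribution on `F^× = ℚ_p^×` is of
the form `P(val(x)) · χ(x) d^×x` for a polynomial `P`. -/
theorem stmt_18 (p : ℕ) [Fact (Nat.Prime p)]
    (χ : ℚ_[p]ˣ →* ℂˣ)
    (μχ : ↥(SchwartzSubmodule ℚ_[p]ˣ) →ₗ[ℂ] ℂ) (hμ0 : μχ ≠ 0)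
    (hμχ : ∀ g : ℚ_[p]ˣ, μχ.comp (translateS p g) = (χ g : ℂ) • μχ)
    (ξ : ↥(SchwartzSubmodule ℚ_[p]ˣ) →ₗ[ℂ] ℂ) (k : ℕ)
    (hξ : ∀ l : List ℚ_[p]ˣ, l.length = k + 1 →
      l.foldr (fun g η => η.comp (translateS p g) - (χ g : ℂ) • η) ξ = 0) :
    ∃ P : Polynomial ℂ, P.natDegree ≤ k ∧
      ∀ f f' : ↥(SchwartzSubmodule ℚ_[p]ˣ),
        (∀ x : ℚ_[p]ˣ, (f' : LocallyConstant ℚ_[p]ˣ ℂ) x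
            = P.eval (((x : ℚ_[p]).valuation : ℂ)) * (f : LocallyConstant ℚ_[p]ˣ ℂ) x) →
        ξ f = μχ f' := by
  have hμ : IsInv χ μχ := by
    intro g φ
    have h := LinearMap.congr_fun (hμχ g) φ
    rw [LinearMap.comp_apply] at h
    rw [h]
    rfl
  obtain ⟨P, hPdeg, hP⟩ := main_induction χ μχ hμ0 hμ k ξ hξ
  refine ⟨P, hPdeg, ?_⟩
  intro f f' hf'
  have hf'eq : f' = mulVal P f := by
    apply Subtype.ext
    apply LocallyConstant.ext
    intro x
    rw [mulVal_apply]
    exact hf' x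
  rw [hf'eq]
  exact hP f
end
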